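/- arXiv:0810.2359 — 2 statements merged into one kernel-verified Lean document; each statement's English description precedes it below -/
import Mathlib

section
/- Let G be a finite simple graph on n vertices that is neither complete nor edgeless. Then G is representable in ℝ^{n−2}: there exists f : V(G) → ℝ^{n−2} such that for all vertices x ≠ x' and y ≠ y', ‖f(x) − f(x')‖ = ‖f(y) − f(y')‖ if and only if ({x,x'} ∈ E(G) ↔ {y,y'} ∈ E(G)). -/
/-!
Let `A` be the adjacency matrix and `H` the hyperplane of vectors with coordinate sum zero. It
suffices to find `c ≠ 0` with `-1 < c` such that the form `x ⬝ᵥ x - c * (x ⬝ᵥ A *ᵥ x)` is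
positive semidefinite on `H` and vanishes at some `x₀ ∈ H`, `x₀ ≠ 0`. Realising this form on the
projections of the basis vectors to `H` as a Gram matrix gives points with
`‖wᵢ - wⱼ‖² = 2 + 2 c Aᵢⱼ`, spanning a space of dimension at most `n - 2` because both `1` and
`x₀` lie in the kernel.

For `c` take the reciprocal of an extreme value of the Rayleigh quotient of `A` on `H`. If the
maximum is positive, use it. Otherwise `x ⬝ᵥ A *ᵥ x ≤ 0` on `H`; testing with `eₚ + e_q - 2eᵣ`
shows that `G` is complete multipartite, so the two non-adjacent vertices `u, v` have a common
neighbour `r`, and `eᵤ + eᵥ - 2eᵣ` has Rayleigh quotient `-4/3`. Hence the minimum lies below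
`-1`, and its reciprocal lies in `(-1, 0)`.
-/

open Module Submodule Matrix

theorem Submodule.exists_mul_le_mul_of_homogeneous {E : Type*} [NormedAddCommGroup E]
    [NormedSpace ℝ E] [FiniteDimensional ℝ E] {H : Submodule ℝ E} (hH : H ≠ ⊥) {Q R : E → ℝ}
    (hQ : Continuous Q) (hR : Continuous R) (hQ2 : ∀ (t : ℝ) x, Q (t • x) = t ^ 2 * Q x)
    (hR2 : ∀ (t : ℝ) x, R (t • x) = t ^ 2 * R x) (hRpos : ∀ x ≠ 0, 0 < R x) :
    ∃ x₀ ∈ H, x₀ ≠ 0 ∧ ∀ x ∈ H, Q x * R x₀ ≤ Q x₀ * R x := by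
  set K := Metric.sphere (0 : E) 1 ∩ H
  have hK : IsCompact K := (isCompact_sphere 0 1).inter_right H.closed_of_finiteDimensional
  obtain ⟨y, hyH, hy0⟩ := H.exists_mem_ne_zero_of_ne_bot hH
  have hKne : K.Nonempty := ⟨‖y‖⁻¹ • y, by simp [norm_smul, hy0], H.smul_mem _ hyH⟩
  have hRK : ∀ x ∈ K, R x ≠ 0 :=
    fun x hx ↦ (hRpos x (ne_zero_of_mem_sphere one_ne_zero ⟨x, hx.1⟩)).ne'
  obtain ⟨x₀, ⟨hx₀1, hx₀H⟩, hmax⟩ :=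
    hK.exists_isMaxOn hKne (hQ.continuousOn.div hR.continuousOn hRK)
  have hx₀0 : x₀ ≠ 0 := ne_zero_of_mem_sphere one_ne_zero ⟨x₀, hx₀1⟩
  refine ⟨x₀, hx₀H, hx₀0, fun x hx ↦ ?_⟩
  rcases eq_or_ne x 0 with rfl | hx0
  · have hQ0 := hQ2 0 0
    have hR0 := hR2 0 0
    simp only [zero_smul, ne_eq, OfNat.ofNat_ne_zero, not_false_eq_true, zero_pow, zero_mul]
      at hQ0 hR0
    simp [hQ0, hR0]
  · have h : Q (‖x‖⁻¹ • x) / R (‖x‖⁻¹ • x) ≤ Q x₀ / R x₀ :=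
      hmax (show ‖x‖⁻¹ • x ∈ K from ⟨by simp [norm_smul, hx0], H.smul_mem _ hx⟩)
    rw [hQ2, hR2, mul_div_mul_left _ _ (by positivity)] at h
    exact (div_le_div_iff₀ (hRpos x hx0) (hRpos x₀ hx₀0)).1 h

theorem nonempty_linearIsometry_of_finrank_le {𝕜 E F : Type*} [RCLike 𝕜] [NormedAddCommGroup E]
    [InnerProductSpace 𝕜 E] [FiniteDimensional 𝕜 E] [NormedAddCommGroup F] [InnerProductSpace 𝕜 F]
    [FiniteDimensional 𝕜 F] (h : finrank 𝕜 E ≤ finrank 𝕜 F) : Nonempty (E →ₗᵢ[𝕜] F) := by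
  let b := stdOrthonormalBasis 𝕜 E
  let v := stdOrthonormalBasis 𝕜 F ∘ Fin.castLE h
  have hv : Orthonormal 𝕜 v :=
    (stdOrthonormalBasis 𝕜 F).orthonormal.comp _ (Fin.castLE_injective h)
  have hb : Orthonormal 𝕜 b.toBasis := by rw [OrthonormalBasis.coe_toBasis]; exact b.orthonormal
  refine ⟨(b.toBasis.constr 𝕜 v).isometryOfOrthonormal hb ?_⟩
  convert hv
  ext k
  simp

theorem finrank_span_range_add_finrank_ker {K E ι : Type*} [Fintype ι] [DivisionRing K]
    [AddCommGroup E] [Module K E] (w : ι → E) :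
    finrank K (span K (Set.range w)) + finrank K (LinearMap.ker (Fintype.linearCombination K w)) =
      Fintype.card ι := by
  rw [← Fintype.range_linearCombination, LinearMap.finrank_range_add_finrank_ker,
    Module.finrank_fintype_fun_eq_card]

theorem dist_eq_dist_iff_of_dist_eq_ite {V X : Type*} [PseudoMetricSpace X] {r : V → V → Prop}
    [DecidableRel r] {f : V → X} {a b : ℝ} (hab : a ≠ b)
    (hf : ∀ i j, i ≠ j → dist (f i) (f j) = if r i j then a else b) {x x' y y' : V} (hx : x ≠ x')
    (hy : y ≠ y') : dist (f x) (f x') = dist (f y) (f y') ↔ (r x x' ↔ r y y') := by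
  rw [hf x x' hx, hf y y' hy]
  split_ifs <;> simp_all [hab.symm]

section

variable {V : Type*} [Fintype V]

variable (V) in
def sumZero : Submodule ℝ (V → ℝ) :=
  LinearMap.ker (Fintype.linearCombination ℝ fun _ : V ↦ (1 : ℝ))

@[simp]
theorem mem_sumZero {x : V → ℝ} : x ∈ sumZero V ↔ ∑ i, x i = 0 := by
  simp [sumZero, Fintype.linearCombination_apply]

theorem dotProduct_self_pos {x : V → ℝ} (hx : x ≠ 0) : 0 < x ⬝ᵥ x :=
  (Finset.sum_nonneg fun i _ ↦ mul_self_nonneg (x i)).lt_of_ne' (dotProduct_self_eq_zero.not.2 hx)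

theorem linearIndependent_one_of_mem_sumZero [Nonempty V] {x : V → ℝ} (hx : x ∈ sumZero V)
    (hx0 : x ≠ 0) : LinearIndependent ℝ ![1, x] := by
  rw [LinearIndependent.pair_iff]
  intro s t hst
  have hs : s = 0 := by
    have hsum := congrArg (fun y ↦ ∑ i, y i) hst
    simpa [Finset.sum_add_distrib, ← Finset.mul_sum, mem_sumZero.1 hx] using hsum
  subst hs
  simpa [hx0] using hst

variable [DecidableEq V]

open scoped MatrixOrder in
theorem Matrix.PosSemidef.exists_sq_norm_sum_smul_eq {M : Matrix V V ℝ} (hM : M.PosSemidef) :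
    ∃ w : V → EuclideanSpace ℝ V, ∀ x : V → ℝ, ‖∑ i, x i • w i‖ ^ 2 = x ⬝ᵥ M *ᵥ x := by
  obtain ⟨C, rfl⟩ := CStarAlgebra.nonneg_iff_eq_star_mul_self.mp hM.nonneg
  refine ⟨fun i ↦ WithLp.toLp 2 (Cᵀ i), fun x ↦ ?_⟩
  have hsum : ∑ i, x i • WithLp.toLp 2 (Cᵀ i) = WithLp.toLp 2 (C *ᵥ x) := by
    ext k; simp [mulVec, dotProduct, mul_comm]
  rw [hsum, EuclideanSpace.norm_sq_eq, star_eq_conjTranspose,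
    conjTranspose_eq_transpose_of_trivial, ← mulVec_mulVec, dotProduct_mulVec, vecMul_transpose]
  simp [dotProduct, sq]

theorem single_sub_single_mem_sumZero (i j : V) :
    Pi.single i 1 - Pi.single j 1 ∈ sumZero V := by
  simp [Finset.sum_sub_distrib]

theorem sumZero_ne_bot [Nontrivial V] : sumZero V ≠ ⊥ := by
  obtain ⟨i, j, hij⟩ := exists_pair_ne V
  refine (sumZero V).ne_bot_iff.2 ⟨_, single_sub_single_mem_sumZero i j, fun h ↦ ?_⟩
  simpa [hij] using congrFun h i

theorem exists_mul_le_mul_of_mem_sumZero [Nontrivial V] (A : Matrix V V ℝ) :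
    ∃ x₀ ∈ sumZero V, x₀ ≠ 0 ∧
      ∀ x ∈ sumZero V, (x ⬝ᵥ A *ᵥ x) * (x₀ ⬝ᵥ x₀) ≤ (x₀ ⬝ᵥ A *ᵥ x₀) * (x ⬝ᵥ x) := by
  refine Submodule.exists_mul_le_mul_of_homogeneous sumZero_ne_bot ?_ ?_ ?_ ?_ ?_
  · fun_prop
  · fun_prop
  · intro t x
    simp only [mulVec_smul, dotProduct_smul, smul_dotProduct, smul_eq_mul]
    ring
  · intro t x
    simp only [dotProduct_smul, smul_dotProduct, smul_eq_mul]
    ring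
  · exact fun x ↦ dotProduct_self_pos

def veeVec (p q r : V) : V → ℝ := Pi.single p 1 + Pi.single q 1 - Pi.single r 2

theorem veeVec_mem_sumZero (p q r : V) : veeVec p q r ∈ sumZero V := by
  norm_num [veeVec, Finset.sum_add_distrib, Finset.sum_sub_distrib]

theorem dotProduct_veeVec_self {p q r : V} (hpq : p ≠ q) (hpr : p ≠ r) (hqr : q ≠ r) :
    veeVec p q r ⬝ᵥ veeVec p q r = 6 := by
  norm_num [veeVec, dotProduct_add, dotProduct_sub, hpq, hpr, hqr, hpq.symm, hpr.symm, hqr.symm]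

theorem veeVec_dotProduct_mulVec {A : Matrix V V ℝ} (hA : A.IsSymm) (hA0 : ∀ i, A i i = 0)
    (p q r : V) :
    veeVec p q r ⬝ᵥ A *ᵥ veeVec p q r = 2 * A p q - 4 * A p r - 4 * A q r := by
  simp [veeVec, mulVec_add, mulVec_sub, dotProduct_add, add_dotProduct, sub_dotProduct,
    dotProduct_sub, hA0, hA.apply p q, hA.apply p r, hA.apply q r]
  ring

theorem dotProduct_one_sub_smul_mulVec (A : Matrix V V ℝ) (c : ℝ) (x : V → ℝ) :
    x ⬝ᵥ (1 - c • A) *ᵥ x = x ⬝ᵥ x - c * (x ⬝ᵥ A *ᵥ x) := by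
  simp [sub_mulVec, smul_mulVec, dotProduct_sub]

theorem single_sub_single_dotProduct_one_sub_smul_mulVec {A : Matrix V V ℝ} (hA : A.IsSymm)
    (hA0 : ∀ i, A i i = 0) (c : ℝ) {i j : V} (hij : i ≠ j) :
    (Pi.single i 1 - Pi.single j 1) ⬝ᵥ (1 - c • A) *ᵥ (Pi.single i 1 - Pi.single j 1) =
      2 + 2 * c * A i j := by
  simp [mulVec_sub, dotProduct_sub, sub_dotProduct, hA0, hA.apply i j, hij, hij.symm]
  ring

variable (V) in
noncomputable def centering : Matrix V V ℝ :=
  1 - (Fintype.card V : ℝ)⁻¹ • Matrix.of fun _ _ ↦ 1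

theorem centering_mulVec (x : V → ℝ) :
    centering V *ᵥ x = x - ((Fintype.card V : ℝ)⁻¹ * ∑ i, x i) • 1 := by
  rw [centering, sub_mulVec, one_mulVec, smul_mulVec]
  ext i
  simp [mulVec, dotProduct]

theorem centering_mulVec_of_mem {x : V → ℝ} (hx : x ∈ sumZero V) : centering V *ᵥ x = x := by
  rw [centering_mulVec, mem_sumZero.1 hx, mul_zero, zero_smul, sub_zero]

theorem centering_mulVec_mem_sumZero [Nonempty V] (x : V → ℝ) :
    centering V *ᵥ x ∈ sumZero V := by
  simp [centering_mulVec, Finset.sum_sub_distrib]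

theorem centering_mulVec_one [Nonempty V] : centering V *ᵥ 1 = 0 := by
  simp [centering_mulVec]

theorem exists_sq_norm_sub_eq_of_nonneg_on_sumZero {N : Matrix V V ℝ} (hN : N.IsSymm)
    (hpos : ∀ x ∈ sumZero V, 0 ≤ x ⬝ᵥ N *ᵥ x) {x₀ : V → ℝ} (hx₀ : x₀ ∈ sumZero V)
    (hx₀0 : x₀ ≠ 0) (hNx₀ : x₀ ⬝ᵥ N *ᵥ x₀ = 0) :
    ∃ w : V → EuclideanSpace ℝ V,
      (∀ i j, ‖w i - w j‖ ^ 2 =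
        (Pi.single i 1 - Pi.single j 1) ⬝ᵥ N *ᵥ (Pi.single i 1 - Pi.single j 1)) ∧
      finrank ℝ (span ℝ (Set.range w)) ≤ Fintype.card V - 2 := by
  obtain ⟨i₀, -⟩ := Function.ne_iff.1 hx₀0
  have : Nonempty V := ⟨i₀⟩
  set P := centering V
  have hquad (x : V → ℝ) : x ⬝ᵥ (Pᴴ * N * P) *ᵥ x = (P *ᵥ x) ⬝ᵥ N *ᵥ (P *ᵥ x) := by
    rw [Matrix.mul_assoc, ← mulVec_mulVec, dotProduct_mulVec, vecMul_conjTranspose, star_trivial,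
      star_trivial, ← mulVec_mulVec]
  have hM : (Pᴴ * N * P).PosSemidef :=
    .of_dotProduct_mulVec_nonneg (isHermitian_conjTranspose_mul_mul P (by simpa using hN))
      fun x ↦ by simpa only [star_trivial, hquad] using hpos _ (centering_mulVec_mem_sumZero x)
  obtain ⟨w, hw⟩ := hM.exists_sq_norm_sum_smul_eq
  have hker (x : V → ℝ) (hx : (P *ᵥ x) ⬝ᵥ N *ᵥ (P *ᵥ x) = 0) :
      x ∈ LinearMap.ker (Fintype.linearCombination ℝ w) := by
    rw [LinearMap.mem_ker, Fintype.linearCombination_apply, ← norm_eq_zero, ← sq_eq_zero_iff, hw,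
      hquad, hx]
  refine ⟨w, fun i j ↦ ?_, ?_⟩
  · have hd : w i - w j = ∑ k, (Pi.single i 1 - Pi.single j 1 : V → ℝ) k • w k := by
      simp [sub_smul, Finset.sum_sub_distrib, Pi.single_apply]
    rw [hd, hw, hquad, centering_mulVec_of_mem (single_sub_single_mem_sumZero i j)]
  · have hspan : span ℝ (Set.range ![1, x₀]) ≤ LinearMap.ker (Fintype.linearCombination ℝ w) := by
      rw [span_le, Set.range_subset_iff, Fin.forall_fin_two]
      refine ⟨hker _ ?_, hker _ ?_⟩
      · simp [P, centering_mulVec_one]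
      · simp [P, centering_mulVec_of_mem hx₀, hNx₀]
    have h2 := (finrank_span_eq_card (linearIndependent_one_of_mem_sumZero hx₀ hx₀0)).symm.trans_le
      (Submodule.finrank_mono hspan)
    have := finrank_span_range_add_finrank_ker (K := ℝ) w
    simp only [Fintype.card_fin] at h2
    omega

end

namespace SimpleGraph

variable {V : Type*} {G : SimpleGraph V}

theorem IsCompleteMultipartite.exists_adj_adj (hG : G.IsCompleteMultipartite) {a b u v : V}
    (hab : G.Adj a b) (huv : ¬G.Adj u v) : ∃ r, G.Adj u r ∧ G.Adj v r := by
  by_cases hua : G.Adj u a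
  · exact ⟨a, hua, by_contra fun hva ↦ hG.trans u v a huv hva hua⟩
  · have hub : G.Adj u b := by_contra fun hub ↦ hG.trans a u b (by rwa [adj_comm]) hub hab
    exact ⟨b, hub, by_contra fun hvb ↦ hG.trans u v b huv hvb hub⟩

variable [Fintype V] [DecidableEq V] [DecidableRel G.Adj]

theorem isCompleteMultipartite_of_forall_adjMatrix_nonpos
    (h : ∀ x ∈ sumZero V, x ⬝ᵥ G.adjMatrix ℝ *ᵥ x ≤ 0) : G.IsCompleteMultipartite := by
  by_contra hG
  obtain ⟨v, w₁, w₂, hP⟩ := exists_isPathGraph3Compl_of_not_isCompleteMultipartite hG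
  have := h _ (veeVec_mem_sumZero w₁ w₂ v)
  rw [veeVec_dotProduct_mulVec G.isSymm_adjMatrix (by simp)] at this
  norm_num [hP.adj, G.adj_comm w₁ v, G.adj_comm w₂ v, hP.not_adj_fst, hP.not_adj_snd] at this

theorem exists_lt_neg_of_forall_adjMatrix_nonpos
    (h : ∀ x ∈ sumZero V, x ⬝ᵥ G.adjMatrix ℝ *ᵥ x ≤ 0) {a b u v : V} (hab : G.Adj a b)
    (huv : u ≠ v) (hnuv : ¬G.Adj u v) :
    ∃ x₀ ∈ sumZero V, x₀ ≠ 0 ∧ x₀ ⬝ᵥ G.adjMatrix ℝ *ᵥ x₀ < -(x₀ ⬝ᵥ x₀) ∧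
      ∀ x ∈ sumZero V,
        (x₀ ⬝ᵥ G.adjMatrix ℝ *ᵥ x₀) * (x ⬝ᵥ x) ≤ (x ⬝ᵥ G.adjMatrix ℝ *ᵥ x) * (x₀ ⬝ᵥ x₀) := by
  have : Nontrivial V := ⟨u, v, huv⟩
  obtain ⟨r, hur, hvr⟩ :=
    (isCompleteMultipartite_of_forall_adjMatrix_nonpos h).exists_adj_adj hab hnuv
  obtain ⟨x₀, hx₀, hx₀0, hmin⟩ := exists_mul_le_mul_of_mem_sumZero (-G.adjMatrix ℝ)
  simp only [neg_mulVec, dotProduct_neg, neg_mul, neg_le_neg_iff] at hmin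
  refine ⟨x₀, hx₀, hx₀0, ?_, hmin⟩
  have hz := hmin _ (veeVec_mem_sumZero u v r)
  rw [veeVec_dotProduct_mulVec G.isSymm_adjMatrix (by simp),
    dotProduct_veeVec_self huv hur.ne hvr.ne] at hz
  have := dotProduct_self_pos hx₀0
  simp only [adjMatrix_apply, hnuv, hur, hvr, if_true, if_false] at hz
  linarith

theorem exists_degenerate_nonneg_one_sub_smul_adjMatrix {a b u v : V} (hab : G.Adj a b)
    (huv : u ≠ v) (hnuv : ¬G.Adj u v) :
    ∃ c : ℝ, c ≠ 0 ∧ -1 < c ∧ ∃ x₀ ∈ sumZero V, x₀ ≠ 0 ∧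
      x₀ ⬝ᵥ (1 - c • G.adjMatrix ℝ) *ᵥ x₀ = 0 ∧
      ∀ x ∈ sumZero V, 0 ≤ x ⬝ᵥ (1 - c • G.adjMatrix ℝ) *ᵥ x := by
  have : Nontrivial V := ⟨u, v, huv⟩
  simp only [dotProduct_one_sub_smul_mulVec]
  obtain ⟨x₀, hx₀, hx₀0, hmax⟩ := exists_mul_le_mul_of_mem_sumZero (G.adjMatrix ℝ)
  have hR₀ := dotProduct_self_pos hx₀0
  set Q₀ := x₀ ⬝ᵥ G.adjMatrix ℝ *ᵥ x₀
  by_cases hQ₀ : 0 < Q₀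
  · refine ⟨(x₀ ⬝ᵥ x₀) / Q₀, by positivity, by linarith [div_pos hR₀ hQ₀], x₀, hx₀, hx₀0,
      by rw [div_mul_cancel₀ _ hQ₀.ne', sub_self], fun x hx ↦ ?_⟩
    rw [sub_nonneg, div_mul_eq_mul_div, div_le_iff₀ hQ₀]
    linarith [hmax x hx]
  have hnonpos (x) (hx : x ∈ sumZero V) : x ⬝ᵥ G.adjMatrix ℝ *ᵥ x ≤ 0 :=
    nonpos_of_mul_nonpos_left ((hmax x hx).trans (mul_nonpos_of_nonpos_of_nonneg
      (not_lt.1 hQ₀) (by simpa using dotProduct_star_self_nonneg x))) hR₀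
  obtain ⟨x₁, hx₁, hx₁0, hQ₁, hmin⟩ :=
    exists_lt_neg_of_forall_adjMatrix_nonpos hnonpos hab huv hnuv
  have hR₁ := dotProduct_self_pos hx₁0
  set Q₁ := x₁ ⬝ᵥ G.adjMatrix ℝ *ᵥ x₁
  have hQ₁0 : Q₁ < 0 := by linarith
  refine ⟨(x₁ ⬝ᵥ x₁) / Q₁, (div_neg_of_pos_of_neg hR₁ hQ₁0).ne,
    by rw [lt_div_iff_of_neg hQ₁0]; linarith, x₁, hx₁, hx₁0,
    by rw [div_mul_cancel₀ _ hQ₁0.ne, sub_self], fun x hx ↦ ?_⟩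
  rw [sub_nonneg, div_mul_eq_mul_div, div_le_iff_of_neg hQ₁0]
  linarith [hmin x hx]

end SimpleGraph

theorem stmt_13 {V : Type*} [Fintype V] (G : SimpleGraph V)
    (hnc : ¬∀ x y : V, x ≠ y → G.Adj x y)
    (hne : ¬∀ x y : V, ¬G.Adj x y) :
    ∃ f : V → EuclideanSpace ℝ (Fin (Fintype.card V - 2)),
      ∀ x x' y y' : V, x ≠ x' → y ≠ y' →
        (dist (f x) (f x') = dist (f y) (f y') ↔ (G.Adj x x' ↔ G.Adj y y')) := by
  classical
  push Not at hnc hne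
  obtain ⟨u, v, huv, hnuv⟩ := hnc
  obtain ⟨a, b, hab⟩ := hne
  obtain ⟨c, hc0, hc1, x₀, hx₀, hx₀0, hNx₀, hN⟩ :=
    G.exists_degenerate_nonneg_one_sub_smul_adjMatrix hab huv hnuv
  obtain ⟨w, hw, hrank⟩ := exists_sq_norm_sub_eq_of_nonneg_on_sumZero
    (isSymm_one.sub (G.isSymm_adjMatrix.smul c)) hN hx₀ hx₀0 hNx₀
  obtain ⟨L⟩ := nonempty_linearIsometry_of_finrank_le (𝕜 := ℝ) (E := span ℝ (Set.range w))
    (F := EuclideanSpace ℝ (Fin (Fintype.card V - 2))) (by simpa using hrank)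
  let f i := L ⟨w i, subset_span (Set.mem_range_self i)⟩
  have hf (i j) (hij : i ≠ j) : dist (f i) (f j) = if G.Adj i j then √(2 + 2 * c) else √2 := by
    rw [L.dist_map, Subtype.dist_eq, dist_eq_norm, ← Real.sqrt_sq (norm_nonneg _), hw,
      single_sub_single_dotProduct_one_sub_smul_mulVec G.isSymm_adjMatrix (by simp) c hij]
    split_ifs with h <;> simp [h]
  have hsqrt : √(2 + 2 * c) ≠ √2 := by
    rw [Ne, Real.sqrt_inj (by linarith) (by norm_num)]
    simpa using hc0
  exact ⟨f, fun x x' y y' hx hy ↦ dist_eq_dist_iff_of_dist_eq_ite hsqrt hf hx hy⟩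
end

section
/- Let (G, d) be a finite metric space on n points with squared-distance matrix M = (d(v_i,v_j)²). Then (G, d) embeds isometrically into ℝ^{n−1} if and only if Q_M ≤ 0, where Q_M = max { Σ_{1≤i<j≤n} m_ij x_i x_j : Σ x_k² = 1, Σ x_k = 0 }. -/
noncomputable def Q (n : ℕ) (M : Fin n → Fin n → ℝ) : ℝ :=
  sSup {q : ℝ | ∃ x : Fin n → ℝ, ∑ k, x k ^ 2 = 1 ∧ ∑ k, x k = 0 ∧
    q = ∑ i, ∑ j, if i < j then M i j * x i * x j else 0}

/-!
Place `v_n` at the origin and let `C_ij = (m_in + m_jn - m_ij) / 2`. On zero-sum vectors the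
quadratic form of `M` is `-2` times that of `C`, and since the `n`-th row and column of `C` vanish,
any vector may be made zero-sum by changing its `n`-th coordinate. So `Q_M ≤ 0` iff `C` is positive
semidefinite, i.e. iff `C` is the Gram matrix of vectors `p_1, …, p_{n-1}` in `ℝ^{n-1}` (with
`p_n = 0`); these realize the distances since `‖p_i - p_j‖² = C_ii + C_jj - 2 C_ij = m_ij`.
Conversely, for points of an inner product space `C` is the Gram matrix of the `p_i - p_n`.
-/

open Finset Matrix
open scoped MatrixOrder ComplexOrder

namespace Matrix

variable {ι : Type*}

def IsCondNegSemidef [Fintype ι] (M : Matrix ι ι ℝ) : Prop :=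
  ∀ x : ι → ℝ, ∑ i, x i = 0 → x ⬝ᵥ M *ᵥ x ≤ 0

def sqDistMatrix {X : Type*} [PseudoMetricSpace X] (p : ι → X) : Matrix ι ι ℝ :=
  of fun i j => dist (p i) (p j) ^ 2

theorem isSymm_sqDistMatrix {X : Type*} [PseudoMetricSpace X] (p : ι → X) :
    (sqDistMatrix p).IsSymm := by
  ext i j
  simp [sqDistMatrix, dist_comm]

@[simp]
theorem sqDistMatrix_apply_self {X : Type*} [PseudoMetricSpace X] (p : ι → X) (i : ι) :
    sqDistMatrix p i i = 0 := by
  simp [sqDistMatrix]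

/-- If `M` is the matrix of squared distances of points `p i` and `p o` is moved to the origin,
this is the Gram matrix `⟪p i, p j⟫`; the paper's matrix is twice it, with `o = v_n`. -/
noncomputable def sqDistGram (M : Matrix ι ι ℝ) (o : ι) : Matrix ι ι ℝ :=
  of fun i j => (M i o + M j o - M i j) / 2

theorem isSymm_sqDistGram {M : Matrix ι ι ℝ} (hsymm : M.IsSymm) (o : ι) :
    (sqDistGram M o).IsSymm := by
  ext i j
  simp [sqDistGram, hsymm.apply i j, add_comm]

theorem dotProduct_sqDistGram_mulVec [Fintype ι] (M : Matrix ι ι ℝ) (o : ι) {x : ι → ℝ}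
    (hx : ∑ i, x i = 0) : x ⬝ᵥ sqDistGram M o *ᵥ x = -(x ⬝ᵥ M *ᵥ x) / 2 := by
  have expand : ∀ i j, x i * sqDistGram M o i j * x j =
      M i o * x i * x j / 2 + x i * (M j o * x j) / 2 - x i * M i j * x j / 2 := by
    intro i j
    simp only [sqDistGram, of_apply]
    ring
  simp only [dot_mulVec_eq_sum_sum, expand, sum_add_distrib, sum_sub_distrib, ← sum_div,
    ← sum_mul, ← mul_sum, hx]
  ring

theorem IsCondNegSemidef.posSemidef_sqDistGram [Fintype ι] [DecidableEq ι] {M : Matrix ι ι ℝ}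
    (hneg : M.IsCondNegSemidef) (hsymm : M.IsSymm) {o : ι} (ho : M o o = 0) :
    (sqDistGram M o).PosSemidef := by
  set C := sqDistGram M o
  have hCo : C *ᵥ Pi.single o 1 = 0 := by
    ext i
    simp [C, sqDistGram, ho]
  have hoC : Pi.single o 1 ᵥ* C = 0 := by
    ext j
    simp [C, sqDistGram, ho, hsymm.apply o j]
  refine .of_dotProduct_mulVec_nonneg (isSymm_sqDistGram hsymm o) fun x => ?_
  -- the row and column of `o` vanish, so `x` may be shifted at `o` to have zero sum
  set x' := x - (∑ i, x i) • Pi.single o 1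
  have hx' : ∑ i, x' i = 0 := by simp [x', sum_sub_distrib, ← mul_sum]
  have hshift : x' ⬝ᵥ C *ᵥ x' = x ⬝ᵥ C *ᵥ x := by
    rw [mulVec_sub, mulVec_smul, hCo, smul_zero, sub_zero, sub_dotProduct, smul_dotProduct,
      dotProduct_mulVec (Pi.single o 1), hoC, zero_dotProduct, smul_zero, sub_zero]
  rw [star_trivial, ← hshift, dotProduct_sqDistGram_mulVec M o hx']
  linarith [hneg x' hx']

theorem PosSemidef.exists_gram_eq {𝕜 : Type*} [RCLike 𝕜] [Fintype ι] {A : Matrix ι ι 𝕜}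
    (hA : A.PosSemidef) : ∃ v : ι → EuclideanSpace 𝕜 ι, gram 𝕜 v = A := by
  classical
  obtain ⟨B, rfl⟩ := CStarAlgebra.nonneg_iff_eq_star_mul_self.mp hA.nonneg
  refine ⟨fun j => WithLp.toLp 2 fun k => B k j, ?_⟩
  ext i j
  simp [mul_apply, PiLp.inner_apply, mul_comm]

theorem PosSemidef.exists_gram_eq_of_apply_last_eq_zero {𝕜 : Type*} [RCLike 𝕜] {N : ℕ}
    {A : Matrix (Fin (N + 1)) (Fin (N + 1)) 𝕜} (hA : A.PosSemidef)
    (hlast : ∀ i, A i (Fin.last N) = 0) :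
    ∃ p : Fin (N + 1) → EuclideanSpace 𝕜 (Fin N), gram 𝕜 p = A := by
  obtain ⟨q, hq⟩ := (hA.submatrix Fin.castSucc).exists_gram_eq
  refine ⟨Fin.snoc q 0, ?_⟩
  ext i j
  induction i using Fin.lastCases <;> induction j using Fin.lastCases
  · simp only [gram_apply, Fin.snoc_last, inner_zero_left, hlast]
  · rw [gram_apply, Fin.snoc_last, inner_zero_left, ← hA.1.apply, hlast, star_zero]
  · simp only [gram_apply, Fin.snoc_last, inner_zero_right, hlast]
  · simpa only [gram_apply, Fin.snoc_castSucc, submatrix_apply] using congr_fun₂ hq _ _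

theorem sqDistGram_sqDistMatrix {E : Type*} [NormedAddCommGroup E] [InnerProductSpace ℝ E]
    (p : ι → E) (o : ι) : sqDistGram (sqDistMatrix p) o = gram ℝ fun i => p i - p o := by
  ext i j
  have hsub : p i - p j = (p i - p o) - (p j - p o) := by abel
  simp only [sqDistGram, sqDistMatrix, of_apply, gram_apply, dist_eq_norm]
  rw [hsub, norm_sub_sq_real (p i - p o)]
  ring

theorem sqDistMatrix_eq_of_gram_eq_sqDistGram {E : Type*} [NormedAddCommGroup E]
    [InnerProductSpace ℝ E] {M : Matrix ι ι ℝ} (hdiag : ∀ i, M i i = 0) {o : ι} {p : ι → E}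
    (hp : gram ℝ p = sqDistGram M o) : sqDistMatrix p = M := by
  ext i j
  have h := fun i j => congr_fun₂ hp i j
  simp only [gram_apply, sqDistGram, of_apply] at h
  rw [sqDistMatrix, of_apply, dist_eq_norm, norm_sub_sq_real, ← real_inner_self_eq_norm_sq,
    ← real_inner_self_eq_norm_sq, h, h, h, hdiag, hdiag]
  ring

theorem isCondNegSemidef_sqDistMatrix [Fintype ι] {E : Type*} [NormedAddCommGroup E]
    [InnerProductSpace ℝ E] (p : ι → E) : (sqDistMatrix p).IsCondNegSemidef := by
  intro x hx
  rcases isEmpty_or_nonempty ι with _ | ⟨⟨o⟩⟩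
  · simp [dotProduct]
  have hgram := (posSemidef_gram ℝ fun i => p i - p o).dotProduct_mulVec_nonneg x
  rw [star_trivial, ← sqDistGram_sqDistMatrix, dotProduct_sqDistGram_mulVec _ o hx] at hgram
  linarith

theorem IsCondNegSemidef.exists_sqDistMatrix_eq {N : ℕ}
    {M : Matrix (Fin (N + 1)) (Fin (N + 1)) ℝ} (hneg : M.IsCondNegSemidef) (hsymm : M.IsSymm)
    (hdiag : ∀ i, M i i = 0) :
    ∃ p : Fin (N + 1) → EuclideanSpace ℝ (Fin N), sqDistMatrix p = M := by
  have hpsd := hneg.posSemidef_sqDistGram hsymm (hdiag (Fin.last N))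
  obtain ⟨p, hp⟩ :=
    hpsd.exists_gram_eq_of_apply_last_eq_zero fun i => by simp [sqDistGram, hdiag]
  exact ⟨p, sqDistMatrix_eq_of_gram_eq_sqDistGram hdiag hp⟩

end Matrix

theorem sum_upper_eq_half_dotProduct_mulVec {ι : Type*} [Fintype ι] [LinearOrder ι]
    {M : Matrix ι ι ℝ} (hsymm : M.IsSymm) (hdiag : ∀ i, M i i = 0) (x : ι → ℝ) :
    ∑ i, ∑ j, (if i < j then M i j * x i * x j else 0) = (x ⬝ᵥ M *ᵥ x) / 2 := by
  have hsplit : ∀ i j, x i * M i j * x j =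
      (if i < j then M i j * x i * x j else 0) + (if j < i then M j i * x j * x i else 0) := by
    intro i j
    rcases lt_trichotomy i j with h | rfl | h
    · simp only [h, h.not_gt, if_true, if_false, add_zero]
      ring
    · simp [hdiag]
    · simp only [h, h.not_gt, if_true, if_false, zero_add, hsymm.apply i j]
      ring
  rw [dot_mulVec_eq_sum_sum]
  simp only [hsplit, sum_add_distrib]
  rw [sum_comm]
  ring

theorem bddAbove_Q_set {n : ℕ} (M : Fin n → Fin n → ℝ) :
    BddAbove {q : ℝ | ∃ x : Fin n → ℝ, ∑ k, x k ^ 2 = 1 ∧ ∑ k, x k = 0 ∧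
      q = ∑ i, ∑ j, if i < j then M i j * x i * x j else 0} := by
  refine ⟨∑ i, ∑ j, |M i j|, ?_⟩
  rintro q ⟨x, hx1, -, rfl⟩
  have habs : ∀ i, |x i| ≤ 1 := fun i => (sq_le_one_iff_abs_le_one _).mp <|
    hx1 ▸ single_le_sum (fun k _ => sq_nonneg (x k)) (mem_univ i)
  gcongr with i _ j _
  split_ifs
  · calc M i j * x i * x j ≤ |M i j| * (|x i| * |x j|) := by
          rw [← abs_mul, ← abs_mul, ← mul_assoc]
          exact le_abs_self _
      _ ≤ |M i j| := mul_le_of_le_one_right (abs_nonneg _)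
          (mul_le_one₀ (habs i) (abs_nonneg _) (habs j))
  · exact abs_nonneg _

theorem dotProduct_mulVec_le_two_mul_Q {n : ℕ} {M : Matrix (Fin n) (Fin n) ℝ} (hsymm : M.IsSymm)
    (hdiag : ∀ i, M i i = 0) {x : Fin n → ℝ} (hx1 : ∑ k, x k ^ 2 = 1) (hx0 : ∑ k, x k = 0) :
    x ⬝ᵥ M *ᵥ x ≤ 2 * Q n M := by
  have hmem : _ ≤ Q n M := le_csSup (bddAbove_Q_set M) ⟨x, hx1, hx0, rfl⟩
  rw [sum_upper_eq_half_dotProduct_mulVec hsymm hdiag] at hmem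
  linarith

theorem Q_nonpos_iff {n : ℕ} {M : Matrix (Fin n) (Fin n) ℝ} (hsymm : M.IsSymm)
    (hdiag : ∀ i, M i i = 0) : Q n M ≤ 0 ↔ M.IsCondNegSemidef := by
  constructor
  · intro hQ x hx
    rcases eq_or_ne x 0 with rfl | hx0
    · simp
    set t := ∑ k, x k ^ 2
    have ht : 0 < t := by
      obtain ⟨k, hk⟩ := Function.ne_iff.mp hx0
      exact sum_pos' (fun k _ => sq_nonneg (x k)) ⟨k, mem_univ k, pow_two_pos_of_ne_zero hk⟩
    have hs : 0 < (√t)⁻¹ := by positivity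
    have hunit : ∑ k, ((√t)⁻¹ • x) k ^ 2 = 1 := by
      simp [mul_pow, ← mul_sum, Real.sq_sqrt ht.le, t, inv_mul_cancel₀ ht.ne']
    have hzero : ∑ k, ((√t)⁻¹ • x) k = 0 := by simp [← mul_sum, hx]
    have hle := dotProduct_mulVec_le_two_mul_Q hsymm hdiag hunit hzero
    rw [mulVec_smul, smul_dotProduct, dotProduct_smul, smul_eq_mul, smul_eq_mul] at hle
    nlinarith [mul_pos hs hs]
  · intro hneg
    refine Real.sSup_le ?_ le_rfl
    rintro q ⟨x, -, hx, rfl⟩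
    rw [sum_upper_eq_half_dotProduct_mulVec hsymm hdiag]
    linarith [hneg x hx]

theorem stmt_16 (n : ℕ) (G : Type*) [MetricSpace G] (v : Fin n ≃ G) :
    (∃ f : G → EuclideanSpace ℝ (Fin (n - 1)),
        ∀ x y : G, dist (f x) (f y) = dist x y) ↔
    Q n (fun i j => dist (v i) (v j) ^ 2) ≤ 0 := by
  rw [show (fun i j => dist (v i) (v j) ^ 2) = sqDistMatrix v from rfl,
    Q_nonpos_iff (isSymm_sqDistMatrix v) (sqDistMatrix_apply_self v)]
  constructor
  · rintro ⟨f, hf⟩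
    have hiso : sqDistMatrix v = sqDistMatrix (f ∘ v) := by
      ext i j
      simp [sqDistMatrix, hf]
    rw [hiso]
    exact isCondNegSemidef_sqDistMatrix _
  · intro hv
    cases n with
    | zero => exact ⟨0, fun x => (v.symm x).elim0⟩
    | succ N =>
      obtain ⟨p, hp⟩ :=
        hv.exists_sqDistMatrix_eq (isSymm_sqDistMatrix v) (sqDistMatrix_apply_self v)
      refine ⟨p ∘ v.symm, fun x y => ?_⟩
      simpa [sqDistMatrix, pow_left_inj₀ dist_nonneg dist_nonneg two_ne_zero] using
        congr_fun₂ hp (v.symm x) (v.symm y)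
end
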